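/- Let α < 0 and let y be a solution of the second Painlevé equation y''(s) = s·y(s) + 2·y(s)³ + α that is bounded on a neighborhood of +∞. Then s·y(s) → |α| as s → +∞; in particular y(s) ~ |α|/s at +∞. -/

import Mathlib

open MeasureTheory Filter Topology Set


/-- The Painlevé II energy of `u` over a set `I`. -/
noncomputable def EPII (α : ℝ) (u : ℝ → ℝ) (I : Set ℝ) : ℝ :=
  ∫ s in I, ((1:ℝ)/2 * (deriv u s) ^ 2 + 1/2 * s * (u s) ^ 2 + 1/2 * (u s) ^ 4 + α * u s)

/-- A (classical) solution of the second Painlevé equation `y'' = s y + 2 y³ + α`. -/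
def PainleveSol (α : ℝ) (y : ℝ → ℝ) : Prop :=
  ContDiff ℝ 2 y ∧ ∀ s : ℝ, deriv (deriv y) s = s * y s + 2 * (y s) ^ 3 + α

/-- A minimal solution of the second Painlevé equation: it minimizes `E_PII` with respect to
smooth compactly supported perturbations. -/
def MinimalSol (α : ℝ) (y : ℝ → ℝ) : Prop :=
  PainleveSol α y ∧ ∀ φ : ℝ → ℝ, ContDiff ℝ (⊤ : ℕ∞) φ → HasCompactSupport φ →
    EPII α y (tsupport φ) ≤ EPII α (fun s => y s + φ s) (tsupport φ)

lemma anti_of_deriv_nonpos (f f' : ℝ → ℝ) {a b : ℝ}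
    (hd : ∀ s ∈ Set.Icc a b, HasDerivAt f (f' s) s)
    (h0 : ∀ s ∈ Set.Icc a b, f' s ≤ 0) :
    ∀ x ∈ Set.Icc a b, f x ≤ f a := by
  intro x hx
  have hab : a ≤ b := le_trans hx.1 hx.2
  have hcont : ContinuousOn f (Set.Icc a b) := fun s hs =>
    (hd s hs).continuousAt.continuousWithinAt
  have hanti := antitoneOn_of_deriv_nonpos (convex_Icc a b) hcont
    (fun s hs => (hd s (interior_subset hs)).differentiableAt.differentiableWithinAt)
    (fun s hs => by rw [(hd s (interior_subset hs)).deriv]; exact h0 s (interior_subset hs))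
  exact hanti (Set.left_mem_Icc.2 hab) hx hx.1

lemma le_line_of_deriv_le (f f' : ℝ → ℝ) {a b K : ℝ}
    (hd : ∀ s ∈ Set.Icc a b, HasDerivAt f (f' s) s)
    (hK : ∀ s ∈ Set.Icc a b, f' s ≤ K) :
    ∀ x ∈ Set.Icc a b, f x ≤ f a + K * (x - a) := by
  intro x hx
  have := anti_of_deriv_nonpos (fun s => f s - K * s) (fun s => f' s - K)
    (fun s hs => ((hd s hs).sub ((hasDerivAt_id s).const_mul K)).congr_deriv (by ring))
    (fun s hs => sub_nonpos.2 (hK s hs)) x hx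
  linarith

/-- Quadratic comparison: if `g'' ≤ -ε` on `[d,x]` then
`g x ≤ g d + g' d (x-d) - ε/2 (x-d)²`. -/
lemma quad_bound (g g' g'' : ℝ → ℝ) {d x ε : ℝ} (hdx : d ≤ x)
    (hd1 : ∀ s ∈ Set.Icc d x, HasDerivAt g (g' s) s)
    (hd2 : ∀ s ∈ Set.Icc d x, HasDerivAt g' (g'' s) s)
    (hup : ∀ s ∈ Set.Icc d x, g'' s ≤ -ε) :
    g x ≤ g d + g' d * (x - d) - ε / 2 * (x - d) ^ 2 := by
  have hslope : ∀ t ∈ Set.Icc d x, g' t ≤ g' d + (-ε) * (t - d) :=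
    le_line_of_deriv_le g' g'' hd2 hup
  have key := anti_of_deriv_nonpos
    (fun t => g t - (g' d * (t - d) - ε / 2 * (t - d) ^ 2))
    (fun t => g' t - (g' d - ε * (t - d)))
    (fun t ht => by
      have h1 : HasDerivAt (fun t : ℝ => g' d * (t - d) - ε / 2 * (t - d) ^ 2)
          (g' d - ε * (t - d)) t := by
        have h2 : HasDerivAt (fun t : ℝ => t - d) 1 t := (hasDerivAt_id t).sub_const d
        have h3 := ((h2.pow 2).const_mul (ε / 2))
        have h4 := (h2.const_mul (g' d)).sub h3
        exact h4.congr_deriv (by norm_num; ring)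
      exact (hd1 t ht).sub h1)
    (fun t ht => by show g' t - (g' d - ε * (t - d)) ≤ 0; have := hslope t ht; linarith)
    x (Set.mem_Icc.2 ⟨hdx, le_rfl⟩)
  nlinarith [key]

/-- Invariance: if `g'' ≤ -ε` wherever `g ≤ 0` (on `[S,∞)`), and `g d ≤ 0`, `g' d ≤ 0`,
then `g ≤ 0` on `[d, ∞)`. -/
lemma inv_down (g g' g'' : ℝ → ℝ) {S ε d : ℝ} (hε : 0 < ε)
    (hd1 : ∀ s, S ≤ s → HasDerivAt g (g' s) s)
    (hd2 : ∀ s, S ≤ s → HasDerivAt g' (g'' s) s)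
    (hc : ContinuousOn g'' (Set.Ici S))
    (hcond : ∀ s, S ≤ s → g s ≤ 0 → g'' s ≤ -ε)
    (hSd : S ≤ d) (hgd : g d ≤ 0) (hgd' : g' d ≤ 0) :
    ∀ x, d ≤ x → g x ≤ 0 := by
  by_contra hcon
  push_neg at hcon
  obtain ⟨x0, hx0d, hx0⟩ := hcon
  set U : Set ℝ := {s | d ≤ s ∧ 0 < g s} with hU
  have hUne : U.Nonempty := ⟨x0, hx0d, hx0⟩
  have hUbd : BddBelow U := ⟨d, fun s hs => hs.1⟩
  set c := sInf U with hcdef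
  have hdc : d ≤ c := le_csInf hUne fun s hs => hs.1
  have hSc : S ≤ c := le_trans hSd hdc
  obtain ⟨u, hu, hulim⟩ := mem_closure_iff_seq_limit.mp (csInf_mem_closure hUne hUbd)
  have hgc_nonneg : 0 ≤ g c :=
    ge_of_tendsto ((hd1 c hSc).continuousAt.tendsto.comp hulim)
      (Eventually.of_forall fun k => (hu k).2.le)
  have hle : ∀ t, d ≤ t → t < c → g t ≤ 0 := by
    intro t h1 h2
    by_contra ht
    push_neg at ht
    exact absurd (csInf_le hUbd ⟨h1, ht⟩) (not_le.2 h2)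
  have hgc : g c = 0 := by
    rcases eq_or_lt_of_le hdc with h | h
    · exact le_antisymm (h ▸ hgd) hgc_nonneg
    · refine le_antisymm ?_ hgc_nonneg
      have htd : Tendsto g (𝓝[<] c) (𝓝 (g c)) :=
        (hd1 c hSc).continuousAt.continuousWithinAt.tendsto
      refine le_of_tendsto htd ?_
      filter_upwards [Ioo_mem_nhdsLT_of_mem (Set.mem_Ioc.2 ⟨h, le_rfl⟩)] with t ht
      exact hle t ht.1.le ht.2
  have hg_nonpos : ∀ t ∈ Set.Icc d c, g t ≤ 0 := by
    intro t ht
    rcases eq_or_lt_of_le ht.2 with h | h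
    · rw [h, hgc]
    · exact hle t ht.1 h
  have hgpp : ∀ t ∈ Set.Icc d c, g'' t ≤ -ε := fun t ht =>
    hcond t (le_trans hSd ht.1) (hg_nonpos t ht)
  have hg'c : g' c ≤ 0 := by
    have := anti_of_deriv_nonpos g' g''
      (fun s hs => hd2 s (le_trans hSd hs.1))
      (fun s hs => le_trans (hgpp s hs) (by linarith))
      c (Set.mem_Icc.2 ⟨hdc, le_rfl⟩)
    linarith
  -- g'' < 0 slightly to the right of c
  have hev : ∀ᶠ t in 𝓝[Set.Ici S] c, g'' t < 0 := by
    have : g'' c < 0 := lt_of_le_of_lt (hcond c hSc hgc.le) (by linarith)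
    exact (hc c hSc).eventually (Filter.Tendsto.eventually_lt_const this tendsto_id) |>.mono
      (fun t ht => ht)
  obtain ⟨η, hη, hball⟩ := Metric.mem_nhdsWithin_iff.mp hev
  -- pick a point of U inside (c, c+η)
  have huc : ∀ k, c < u k := by
    intro k
    rcases lt_or_eq_of_le (csInf_le hUbd (hu k)) with h | h
    · exact h
    · exact absurd ((h ▸ hgc) : g (u k) = 0) (ne_of_gt (hu k).2)
  obtain ⟨k, hk⟩ := (Metric.tendsto_atTop.mp hulim η hη) |>.imp (fun k h => h k le_rfl) |> fun h => h
  have huk : u k < c + η := by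
    have := hk
    rw [Real.dist_eq, abs_lt] at this
    linarith
  -- on [c, u k], g'' < 0, hence g' ≤ g' c ≤ 0, hence g ≤ g c = 0
  have hsub : ∀ t ∈ Set.Icc c (u k), g'' t < 0 := by
    intro t ht
    apply hball
    constructor
    · rw [Metric.mem_ball, Real.dist_eq, abs_lt]
      constructor <;> [linarith [ht.1]; linarith [ht.2]]
    · exact le_trans hSc ht.1
  have hg'le : ∀ t ∈ Set.Icc c (u k), g' t ≤ g' c :=
    anti_of_deriv_nonpos g' g''
      (fun s hs => hd2 s (le_trans hSc hs.1))
      (fun s hs => (hsub s hs).le)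
  have : g (u k) ≤ g c :=
    anti_of_deriv_nonpos g g'
      (fun s hs => hd1 s (le_trans hSc hs.1))
      (fun s hs => le_trans (hg'le s hs) hg'c)
      (u k) (Set.mem_Icc.2 ⟨(huc k).le, le_rfl⟩)
  rw [hgc] at this
  exact absurd this (not_le.2 (hu k).2)

/-- Main dynamical lemma: if `g'' ≤ -ε` wherever `g ≤ 0` on `[S,∞)`, and `g` is bounded
below on `[S,∞)`, then eventually `g > 0`. -/
lemma main_down (g g' g'' : ℝ → ℝ) {S ε C : ℝ} (hε : 0 < ε)
    (hd1 : ∀ s, S ≤ s → HasDerivAt g (g' s) s)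
    (hd2 : ∀ s, S ≤ s → HasDerivAt g' (g'' s) s)
    (hc : ContinuousOn g'' (Set.Ici S))
    (hcond : ∀ s, S ≤ s → g s ≤ 0 → g'' s ≤ -ε)
    (hbd : ∀ s, S ≤ s → -C ≤ g s) :
    ∀ᶠ s in Filter.atTop, 0 < g s := by
  by_contra hcon
  rw [Filter.not_eventually] at hcon
  have hfreq : ∃ᶠ s in Filter.atTop, g s ≤ 0 := hcon.mono fun s hs => not_lt.1 hs
  -- Step 1: there is no point `d ≥ S` with `g d ≤ 0` and `g' d ≤ 0`.
  have hno : ∀ d, S ≤ d → g d ≤ 0 → 0 < g' d := by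
    intro d hSd hgd
    by_contra hgd'
    push_neg at hgd'
    have hinv := inv_down g g' g'' hε hd1 hd2 hc hcond hSd hgd hgd'
    set T := max 1 (2 * (C + 1) / ε) with hTdef
    have hT1 : (1:ℝ) ≤ T := le_max_left _ _
    have hT2 : 2 * (C + 1) / ε ≤ T := le_max_right _ _
    have hdx : d ≤ d + T := by linarith
    have hq := quad_bound g g' g'' hdx
      (fun s hs => hd1 s (le_trans hSd hs.1))
      (fun s hs => hd2 s (le_trans hSd hs.1))
      (fun s hs => hcond s (le_trans hSd hs.1) (hinv s hs.1))
    have hbx := hbd (d + T) (by linarith)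
    have hT2' : 2 * (C + 1) ≤ ε * T := by
      rw [div_le_iff₀ hε] at hT2; linarith
    have hC : 0 ≤ C := by linarith [hbd d hSd, hgd]
    simp only [add_sub_cancel_left] at hq
    have hT0 : 0 ≤ T := by linarith
    have h5 : 2 * (C + 1) * T ≤ (ε * T) * T := mul_le_mul_of_nonneg_right hT2' hT0
    have h6 : 2 * (C + 1) * 1 ≤ 2 * (C + 1) * T :=
      mul_le_mul_of_nonneg_left hT1 (by linarith)
    have h7 : g' d * T ≤ 0 := mul_nonpos_of_nonpos_of_nonneg hgd' hT0
    nlinarith [hq, hbx, hgd, h5, h6, h7]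
  -- Step 2: case analysis
  by_cases hall : ∀ s, S ≤ s → g s ≤ 0
  · -- g ≤ 0 everywhere on [S,∞): then g' > 0 everywhere but g' decreases linearly.
    have hg'pos : ∀ s, S ≤ s → 0 < g' s := fun s hs => hno s hs (hall s hs)
    set x := S + g' S / ε + 1 with hxdef
    have hSx : S ≤ x := by
      have h1 := hg'pos S le_rfl
      have h2 : 0 < g' S / ε := div_pos h1 hε
      rw [hxdef]; linarith
    have hline := le_line_of_deriv_le g' g'' (K := -ε)
      (fun s hs => hd2 s hs.1)
      (fun s hs => hcond s hs.1 (hall s hs.1))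
      x (Set.mem_Icc.2 ⟨hSx, le_rfl⟩)
    have : g' x ≤ g' S + -ε * (g' S / ε + 1) := by
      have hx : x - S = g' S / ε + 1 := by rw [hxdef]; ring
      rw [hx] at hline; exact hline
    have hcalc : g' S + -ε * (g' S / ε + 1) = -ε := by
      field_simp; ring
    rw [hcalc] at this
    exact absurd (hg'pos x hSx) (not_lt.2 (by linarith))
  · push_neg at hall
    obtain ⟨a, hSa, hga⟩ := hall
    obtain ⟨b, hab1, hgb⟩ := (Filter.frequently_atTop.mp hfreq) (a + 1)
    have hab : a ≤ b := by linarith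
    set V : Set ℝ := {s | s ∈ Set.Icc a b ∧ 0 < g s} with hV
    have haV : a ∈ V := ⟨⟨le_rfl, hab⟩, hga⟩
    have hVne : V.Nonempty := ⟨a, haV⟩
    have hVbd : BddAbove V := ⟨b, fun s hs => hs.1.2⟩
    set d := sSup V with hddef
    have had : a ≤ d := le_csSup hVbd haV
    have hdb : d ≤ b := csSup_le hVne fun s hs => hs.1.2
    have hSd : S ≤ d := le_trans hSa had
    obtain ⟨v, hv, hvlim⟩ := mem_closure_iff_seq_limit.mp (csSup_mem_closure hVne hVbd)
    have hgd_nonneg : 0 ≤ g d :=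
      ge_of_tendsto ((hd1 d hSd).continuousAt.tendsto.comp hvlim)
        (Eventually.of_forall fun k => (hv k).2.le)
    have hgt : ∀ t, d < t → t ≤ b → g t ≤ 0 := by
      intro t h1 h2
      by_contra ht
      push_neg at ht
      exact absurd (le_csSup hVbd ⟨⟨le_trans had h1.le, h2⟩, ht⟩) (not_le.2 h1)
    have hgd : g d = 0 := by
      rcases eq_or_lt_of_le hdb with h | h
      · exact le_antisymm (h ▸ hgb) hgd_nonneg
      · refine le_antisymm ?_ hgd_nonneg
        have htd : Tendsto g (𝓝[>] d) (𝓝 (g d)) :=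
          (hd1 d hSd).continuousAt.continuousWithinAt.tendsto
        refine le_of_tendsto htd ?_
        filter_upwards [Ioo_mem_nhdsGT_of_mem (Set.mem_Ico.2 ⟨le_rfl, h⟩)] with t ht
        exact hgt t ht.1 ht.2.le
    have hslope := hasDerivAt_iff_tendsto_slope.mp (hd1 d hSd)
    have hg'd : g' d ≤ 0 := by
      rcases eq_or_lt_of_le hdb with h | h
      · -- d = b : approach from the left along v
        have hvne : ∀ k, v k ≠ d := by
          intro k hk
          exact absurd ((hk ▸ (hv k).2) : 0 < g d) (by rw [hgd]; exact lt_irrefl 0)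
        have hvlt : ∀ k, v k < d := fun k =>
          lt_of_le_of_ne (le_csSup hVbd (hv k)) (hvne k)
        have hcomp : Tendsto (fun k => slope g d (v k)) Filter.atTop (𝓝 (g' d)) := by
          refine hslope.comp ?_
          rw [tendsto_nhdsWithin_iff]
          exact ⟨hvlim, Eventually.of_forall fun k => hvne k⟩
        refine le_of_tendsto hcomp (Eventually.of_forall fun k => ?_)
        rw [slope_def_field, hgd, sub_zero]
        apply div_nonpos_of_nonneg_of_nonpos (hv k).2.le
        linarith [hvlt k]
      · -- d < b : approach from the right
        have hmono : Tendsto (slope g d) (𝓝[>] d) (𝓝 (g' d)) :=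
          hslope.mono_left (nhdsWithin_mono d fun x hx => ne_of_gt hx)
        refine le_of_tendsto hmono ?_
        filter_upwards [Ioo_mem_nhdsGT_of_mem (Set.mem_Ico.2 ⟨le_rfl, h⟩)] with t ht
        rw [slope_def_field, hgd, sub_zero]
        apply div_nonpos_of_nonpos_of_nonneg (hgt t ht.1 ht.2.le)
        linarith [ht.1]
    exact absurd (hno d hSd hgd.le) (not_lt.2 hg'd)

lemma haux1 (c s : ℝ) (hs0 : s ≠ 0) :
    HasDerivAt (fun t : ℝ => c * t ^ (-1 : ℤ)) (c * (-1) * s ^ (-2 : ℤ)) s := by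
  have h := (hasDerivAt_zpow (-1) s (Or.inl hs0)).const_mul c
  exact h.congr_deriv (by norm_num)

lemma haux2 (c s : ℝ) (hs0 : s ≠ 0) :
    HasDerivAt (fun t : ℝ => c * (-1) * t ^ (-2 : ℤ)) (c * 2 * s ^ (-3 : ℤ)) s := by
  have h := (hasDerivAt_zpow (-2) s (Or.inl hs0)).const_mul (c * (-1))
  exact h.congr_deriv (by norm_num; ring)

lemma haux3 (c s : ℝ) (hs0 : s ≠ 0) : ContinuousAt (fun t : ℝ => c * 2 * t ^ (-3 : ℤ)) s :=
  continuousAt_const.mul (continuousAt_zpow₀ s (-3) (Or.inl hs0))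

lemma hzp3 (c s : ℝ) (hs0 : 0 < s) (hc : 0 ≤ c) : 0 ≤ c * 2 * s ^ (-3 : ℤ) := by
  rw [show (-3 : ℤ) = -(3 : ℕ) by norm_num, zpow_neg, zpow_natCast]
  positivity

lemma hzp3' (c s : ℝ) (hs0 : 0 < s) : c * 2 * s ^ (-3 : ℤ) = 2 * c / s ^ 3 := by
  rw [show (-3 : ℤ) = -(3 : ℕ) by norm_num, zpow_neg, zpow_natCast]
  field_simp

/-- Any solution of Painlevé II (`α < 0`) bounded near `+∞` satisfies `y(s) ~ |α|/s`
at `+∞`. -/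
theorem stmt17 (α : ℝ) (hα : α < 0) (y : ℝ → ℝ) (hy : PainleveSol α y)
    (hbdd : ∃ m M : ℝ, ∀ s : ℝ, m ≤ s → |y s| ≤ M) :
    Filter.Tendsto (fun s => s * y s) Filter.atTop (𝓝 |α|) := by
  obtain ⟨m, M, hM⟩ := hbdd
  set β := -α with hβdef
  have hβ : 0 < β := by linarith
  have hy2 : ContDiff ℝ 2 y := hy.1
  have heq : ∀ s, deriv (deriv y) s = s * y s + 2 * (y s) ^ 3 + α := hy.2
  have hcd1 : ContDiff ℝ 1 (deriv y) := by
    have h2 : ContDiff ℝ ((1 : WithTop ℕ∞) + 1) y := by norm_num; exact hy2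
    exact (contDiff_succ_iff_deriv.mp h2).2.2
  have hdy : ∀ s : ℝ, HasDerivAt y (deriv y s) s := fun s =>
    ((hy2.differentiable (by norm_num)) s).hasDerivAt
  have hdy' : ∀ s : ℝ, HasDerivAt (deriv y) (deriv (deriv y) s) s := fun s =>
    ((hcd1.differentiable (by norm_num)) s).hasDerivAt
  have hycont2 : Continuous (deriv (deriv y)) := hcd1.continuous_deriv le_rfl
  -- Step 1: y is eventually positive
  have hpos : ∀ᶠ s in Filter.atTop, 0 < y s := by
    apply main_down y (deriv y) (deriv (deriv y)) hβ
      (fun s _ => hdy s) (fun s _ => hdy' s) hycont2.continuousOn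
      (S := max m 1) (C := M)
    · intro s hs hys
      rw [heq s]
      have hs1 : (1:ℝ) ≤ s := le_trans (le_max_right m 1) hs
      have h1 : s * y s ≤ 0 := mul_nonpos_of_nonneg_of_nonpos (by linarith) hys
      have h2 : y s ^ 3 ≤ 0 := Odd.pow_nonpos (by decide) hys
      linarith
    · intro s hs
      have := abs_le.mp (hM s (le_trans (le_max_left m 1) hs))
      linarith [this.1]
  obtain ⟨s₁, hs₁⟩ := Filter.eventually_atTop.mp hpos
  -- Step 2: upper bound
  have hupper : ∀ ε : ℝ, 0 < ε → ∀ᶠ s in Filter.atTop, s * y s < β + ε := by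
    intro ε hε
    set c := β + ε with hcdef
    have hc : 0 < c := by linarith
    set S := max (max m 1) (4 * c / ε) with hSdef
    have hS1 : (1:ℝ) ≤ S := le_trans (le_max_right m 1) (le_max_left _ _)
    have hSm : m ≤ S := le_trans (le_max_left m 1) (le_max_left _ _)
    have hSc : 4 * c / ε ≤ S := le_max_right _ _
    have hSpos : ∀ s, S ≤ s → (0:ℝ) < s := fun s hs => by linarith [le_trans hS1 hs]
    have key := main_down (fun s => c * s ^ (-1 : ℤ) - y s)
      (fun s => c * (-1) * s ^ (-2 : ℤ) - deriv y s)
      (fun s => c * 2 * s ^ (-3 : ℤ) - deriv (deriv y) s)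
      (S := S) (C := M) (ε := ε / 2) (by linarith)
      (fun s hs => (haux1 c s (ne_of_gt (hSpos s hs))).sub (hdy s))
      (fun s hs => (haux2 c s (ne_of_gt (hSpos s hs))).sub (hdy' s))
      (fun s hs => ((haux3 c s (ne_of_gt (hSpos s hs))).sub
          hycont2.continuousAt).continuousWithinAt)
      (by
        intro s hs hgs
        replace hgs : c * s ^ (-1 : ℤ) - y s ≤ 0 := hgs
        show c * 2 * s ^ (-3 : ℤ) - deriv (deriv y) s ≤ -(ε / 2)
        have hs1 : (1:ℝ) ≤ s := le_trans hS1 hs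
        have hs0 : (0:ℝ) < s := by linarith
        rw [zpow_neg_one] at hgs
        have hyc : c * s⁻¹ ≤ y s := by linarith
        have hyc' : c ≤ s * y s := by
          have h6 := mul_le_mul_of_nonneg_left hyc (le_of_lt hs0)
          calc c = s * (c * s⁻¹) := by field_simp
          _ ≤ s * y s := h6
        have hypos : 0 < y s := lt_of_lt_of_le (by positivity : (0:ℝ) < c * s⁻¹) hyc
        have hy'' : ε ≤ deriv (deriv y) s := by
          rw [heq s]
          have h3 : 0 ≤ y s ^ 3 := le_of_lt (by positivity)
          rw [hcdef] at hyc'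
          linarith
        have hs3 : 4 * c ≤ ε * s ^ 3 := by
          have h4 : s ≤ s ^ 3 := by
            nlinarith [mul_le_mul hs1 hs1 zero_le_one (by linarith : (0:ℝ) ≤ s)]
          have h5 : 4 * c / ε ≤ s := le_trans hSc hs
          rw [div_le_iff₀ hε] at h5
          nlinarith
        have hzp : c * 2 * s ^ (-3 : ℤ) ≤ ε / 2 := by
          rw [hzp3' c s hs0]
          rw [div_le_iff₀ (by positivity : (0:ℝ) < s ^ 3)]
          nlinarith
        linarith)
      (by
        intro s hs
        show -M ≤ c * s ^ (-1 : ℤ) - y s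
        have hs0 := hSpos s hs
        have := abs_le.mp (hM s (le_trans hSm hs))
        have hzp : (0:ℝ) ≤ c * s ^ (-1 : ℤ) := by
          rw [zpow_neg_one]; positivity
        linarith [this.2])
    filter_upwards [key, Filter.eventually_ge_atTop (1:ℝ)] with s hgs hs1
    replace hgs : 0 < c * s ^ (-1 : ℤ) - y s := hgs
    have hs0 : (0:ℝ) < s := by linarith
    rw [zpow_neg_one] at hgs
    have hlt : y s < c * s⁻¹ := by linarith
    calc s * y s < s * (c * s⁻¹) := mul_lt_mul_of_pos_left hlt hs0
    _ = c := by field_simp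
  -- Step 3: lower bound
  have hlower : ∀ ε : ℝ, 0 < ε → ε < β → ∀ᶠ s in Filter.atTop, β - ε < s * y s := by
    intro ε hε hεβ
    set c := β - ε with hcdef
    have hc : 0 < c := by linarith
    have hcβ : c ≤ β := by linarith
    set S := max (max (max m 1) s₁) (4 * β ^ 3 / ε) with hSdef
    have hS1 : (1:ℝ) ≤ S :=
      le_trans (le_trans (le_max_right m 1) (le_max_left _ s₁)) (le_max_left _ _)
    have hSm : m ≤ S :=
      le_trans (le_trans (le_max_left m 1) (le_max_left _ s₁)) (le_max_left _ _)
    have hSs₁ : s₁ ≤ S := le_trans (le_max_right _ s₁) (le_max_left _ _)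
    have hSc : 4 * β ^ 3 / ε ≤ S := le_max_right _ _
    have hSpos : ∀ s, S ≤ s → (0:ℝ) < s := fun s hs => by linarith [le_trans hS1 hs]
    have key := main_down (fun s => y s - c * s ^ (-1 : ℤ))
      (fun s => deriv y s - c * (-1) * s ^ (-2 : ℤ))
      (fun s => deriv (deriv y) s - c * 2 * s ^ (-3 : ℤ))
      (S := S) (C := M + β) (ε := ε / 2) (by linarith)
      (fun s hs => (hdy s).sub (haux1 c s (ne_of_gt (hSpos s hs))))
      (fun s hs => (hdy' s).sub (haux2 c s (ne_of_gt (hSpos s hs))))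
      (fun s hs => (hycont2.continuousAt.sub
          (haux3 c s (ne_of_gt (hSpos s hs)))).continuousWithinAt)
      (by
        intro s hs hgs
        replace hgs : y s - c * s ^ (-1 : ℤ) ≤ 0 := hgs
        show deriv (deriv y) s - c * 2 * s ^ (-3 : ℤ) ≤ -(ε / 2)
        have hs1 : (1:ℝ) ≤ s := le_trans hS1 hs
        have hs0 : (0:ℝ) < s := by linarith
        rw [zpow_neg_one] at hgs
        have hyc : y s ≤ c * s⁻¹ := by linarith
        have hypos : 0 < y s := hs₁ s (le_trans hSs₁ hs)
        have hyc' : s * y s ≤ c := by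
          have h6 := mul_le_mul_of_nonneg_left hyc (le_of_lt hs0)
          calc s * y s ≤ s * (c * s⁻¹) := h6
          _ = c := by field_simp
        have hy3 : y s ^ 3 ≤ β ^ 3 / s ^ 3 := by
          have h1 : y s ≤ β / s := by
            rw [le_div_iff₀ hs0]
            calc y s * s = s * y s := by ring
            _ ≤ c := hyc'
            _ ≤ β := hcβ
          calc y s ^ 3 ≤ (β / s) ^ 3 := pow_le_pow_left₀ (le_of_lt hypos) h1 3
          _ = β ^ 3 / s ^ 3 := by rw [div_pow]
        have hs3 : 4 * β ^ 3 ≤ ε * s ^ 3 := by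
          have h4 : s ≤ s ^ 3 := by
            nlinarith [mul_le_mul hs1 hs1 zero_le_one (by linarith : (0:ℝ) ≤ s)]
          have h5 : 4 * β ^ 3 / ε ≤ s := le_trans hSc hs
          rw [div_le_iff₀ hε] at h5
          nlinarith
        have hs3pos : (0:ℝ) < s ^ 3 := by positivity
        have hy3' : 2 * y s ^ 3 ≤ ε / 2 := by
          have h2 : β ^ 3 / s ^ 3 ≤ ε / 4 := by
            rw [div_le_div_iff₀ hs3pos (by norm_num : (0:ℝ) < 4)]
            nlinarith
          linarith
        have hy'' : deriv (deriv y) s ≤ -(ε / 2) := by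
          rw [heq s]
          rw [hcdef] at hyc'
          linarith
        have h0 := hzp3 c s hs0 hc.le
        calc deriv (deriv y) s - c * 2 * s ^ (-3 : ℤ) ≤ deriv (deriv y) s := by linarith
        _ ≤ -(ε / 2) := hy'')
      (by
        intro s hs
        show -(M + β) ≤ y s - c * s ^ (-1 : ℤ)
        have hs1 : (1:ℝ) ≤ s := le_trans hS1 hs
        have hs0 : (0:ℝ) < s := by linarith
        have := abs_le.mp (hM s (le_trans hSm hs))
        have hzp : c * s ^ (-1 : ℤ) ≤ β := by
          rw [zpow_neg_one]
          calc c * s⁻¹ ≤ c * 1 := by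
                apply mul_le_mul_of_nonneg_left _ (le_of_lt hc)
                rw [inv_le_one_iff₀]; right; exact hs1
          _ = c := mul_one c
          _ ≤ β := hcβ
        linarith [this.1])
    filter_upwards [key, Filter.eventually_ge_atTop (1:ℝ)] with s hgs hs1
    replace hgs : 0 < y s - c * s ^ (-1 : ℤ) := hgs
    have hs0 : (0:ℝ) < s := by linarith
    rw [zpow_neg_one] at hgs
    have hlt : c * s⁻¹ < y s := by linarith
    calc β - ε = s * (c * s⁻¹) := by rw [← hcdef]; field_simp
    _ < s * y s := mul_lt_mul_of_pos_left hlt hs0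
  -- conclude
  have habs : |α| = β := abs_of_neg hα
  rw [habs, tendsto_order]
  constructor
  · intro b hb
    rcases lt_or_ge b 0 with hb0 | hb0
    · filter_upwards [hpos, Filter.eventually_gt_atTop (0:ℝ)] with s hy0 hs0
      nlinarith
    · have hε : 0 < (β - b) / 2 := by linarith
      have hεβ : (β - b) / 2 < β := by linarith
      filter_upwards [hlower ((β - b) / 2) hε hεβ] with s hs
      linarith
  · intro b hb
    filter_upwards [hupper (b - β) (by linarith)] with s hs
    linarith
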